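/- arXiv:2109.11299 — 4 statements merged into one kernel-verified Lean document; each statement's English description precedes it below -/
import Mathlib

section
/- If X and Y are hyper-sober T0 spaces, then the product space X × Y is hyper-sober. -/
/-!
Two inseparable points are both generic points of their common closure, so a hyper-sober space is
T0, and hyper-sobriety just asks every irreducible set to contain one of its generic points.
Let `F ⊆ X × Y` be irreducible and `x ∈ π₁ F` a generic point of `π₁ F`. The part of `F` off the
fibre over `x` is not dense in `F`: otherwise it would be irreducible and its projection would have
a generic point, equal to `x` by T0. Hence `G = F \ cl (F \ π₁⁻¹ {x})` is a nonempty relatively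
open, hence dense and irreducible, subset of `F` inside the fibre over `x`, and a generic point
`y ∈ π₂ G` yields the generic point `(x, y) ∈ G` of `F`.
-/

open Set

/-- A subset `A` of a topological space is irreducible: it is nonempty and whenever
it is contained in the union of two closed sets, it is contained in one of them. -/
def IsIrred {X : Type*} [TopologicalSpace X] (A : Set X) : Prop :=
  A.Nonempty ∧ ∀ B C : Set X, IsClosed B → IsClosed C → A ⊆ B ∪ C → A ⊆ B ∨ A ⊆ C

/-- A space is hyper-sober if every irreducible subset `F` contains a unique point `x`
with `F ⊆ cl {x}`. -/
def HyperSober (X : Type*) [TopologicalSpace X] : Prop :=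
  ∀ F : Set X, IsIrred F → ∃! x, x ∈ F ∧ F ⊆ closure {x}

lemma isIrred_iff_isIrreducible {X : Type*} [TopologicalSpace X] {A : Set X} :
    IsIrred A ↔ IsIrreducible A :=
  and_congr_right' isPreirreducible_iff_isClosed_union_isClosed.symm

theorem hyperSober_iff {X : Type*} [TopologicalSpace X] :
    HyperSober X ↔ T0Space X ∧ ∀ F : Set X, IsIrreducible F → ∃ x ∈ F, F ⊆ closure {x} := by
  constructor
  · intro h
    refine ⟨t0Space_iff_inseparable X |>.mpr fun x y hxy ↦ ?_, fun F hF ↦ ?_⟩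
    · have hcl : closure {x} = closure {y} := inseparable_iff_closure_eq.mp hxy
      refine (h _ (isIrred_iff_isIrreducible.mpr isIrreducible_singleton.closure)).unique
        ⟨subset_closure rfl, subset_rfl⟩ ⟨?_, hcl.subset⟩
      exact hcl ▸ subset_closure rfl
    · obtain ⟨x, hx, -⟩ := h F (isIrred_iff_isIrreducible.mpr hF)
      exact ⟨x, hx⟩
  · rintro ⟨_, h⟩ F hF
    obtain ⟨x, hxF, hFx⟩ := h F (isIrred_iff_isIrreducible.mp hF)
    refine ⟨x, ⟨hxF, hFx⟩, fun y ⟨hyF, hFy⟩ ↦ ?_⟩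
    exact (specializes_iff_mem_closure.mpr (hFy hxF)).antisymm
      (specializes_iff_mem_closure.mpr (hFx hyF)) |>.eq

section

variable {X Z : Type*} [TopologicalSpace X] [TopologicalSpace Z]

theorem IsIrreducible.of_subset_of_subset_closure {s t : Set Z} (ht : IsIrreducible t)
    (hst : s ⊆ t) (hts : t ⊆ closure s) : IsIrreducible s := by
  have hcl : closure s = closure t :=
    (closure_mono hst).antisymm (closure_minimal hts isClosed_closure)
  exact isIrreducible_iff_closure.mp (hcl ▸ ht.closure)

theorem IsIrreducible.not_subset_closure_diff_preimage_singleton [T0Space X]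
    (hX : ∀ A : Set X, IsIrreducible A → ∃ x ∈ A, A ⊆ closure {x})
    {f : Z → X} (hf : Continuous f) {F : Set Z} (hF : IsIrreducible F)
    {x : X} (hx : x ∈ f '' F) (hFx : f '' F ⊆ closure {x}) :
    ¬ F ⊆ closure (F \ f ⁻¹' {x}) := by
  intro hdense
  have hS : IsIrreducible (F \ f ⁻¹' {x}) := hF.of_subset_of_subset_closure sdiff_subset hdense
  obtain ⟨_, ⟨z, hzS, rfl⟩, hSz⟩ := hX _ (hS.image f hf.continuousOn)
  have hFz : f '' F ⊆ closure {f z} :=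
    (image_mono hdense).trans <| (image_closure_subset_closure_image hf).trans <|
      closure_minimal hSz isClosed_closure
  have hzx : f z = x := (specializes_iff_mem_closure.mpr (hFx ⟨z, hzS.1, rfl⟩)).antisymm
    (specializes_iff_mem_closure.mpr (hFz hx)) |>.eq.symm
  exact hzS.2 hzx

end

theorem IsIrreducible.exists_mem_prod_subset_closure_singleton {X Y : Type*}
    [TopologicalSpace X] [TopologicalSpace Y] [T0Space X]
    (hX : ∀ A : Set X, IsIrreducible A → ∃ x ∈ A, A ⊆ closure {x})
    (hY : ∀ B : Set Y, IsIrreducible B → ∃ y ∈ B, B ⊆ closure {y})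
    {F : Set (X × Y)} (hF : IsIrreducible F) : ∃ p ∈ F, F ⊆ closure {p} := by
  obtain ⟨x, hxF, hFx⟩ := hX _ (hF.image Prod.fst continuous_fst.continuousOn)
  set G := F ∩ (closure (F \ Prod.fst ⁻¹' {x}))ᶜ
  have hG : G.Nonempty := inter_compl_nonempty_iff.mpr <|
    hF.not_subset_closure_diff_preimage_singleton hX continuous_fst hxF hFx
  have hFG : F ⊆ closure G := subset_closure_inter_of_isPreirreducible_of_isOpen hF.2
    isClosed_closure.isOpen_compl hG
  have hGx : G ⊆ Prod.fst ⁻¹' {x} := fun q hq ↦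
    by_contra fun hqx ↦ hq.2 (subset_closure ⟨hq.1, hqx⟩)
  obtain ⟨_, ⟨⟨x', y⟩, hpG, rfl⟩, hGy⟩ :=
    hY _ ((hF.of_subset_of_subset_closure inter_subset_left hFG).image Prod.snd
      continuous_snd.continuousOn)
  obtain rfl : x' = x := hGx hpG
  have hGp : G ⊆ closure {(x', y)} := by
    rw [← singleton_prod_singleton, closure_prod_eq]
    intro q hq
    exact ⟨hFx ⟨q, hq.1, rfl⟩, hGy ⟨q, hq, rfl⟩⟩
  exact ⟨(x', y), hpG.1, hFG.trans (closure_minimal hGp isClosed_closure)⟩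

theorem hyperSober_prod_general {X Y : Type*} [TopologicalSpace X] [TopologicalSpace Y]
    (hX : HyperSober X) (hY : HyperSober Y) :
    HyperSober (X × Y) := by
  rw [hyperSober_iff] at hX hY ⊢
  obtain ⟨_, hX⟩ := hX
  obtain ⟨_, hY⟩ := hY
  exact ⟨inferInstance, fun F hF ↦ hF.exists_mem_prod_subset_closure_singleton hX hY⟩

theorem hyperSober_prod {X Y : Type*} [TopologicalSpace X] [TopologicalSpace Y]
    [T0Space X] [T0Space Y] (hX : HyperSober X) (hY : HyperSober Y) :
    HyperSober (X × Y) :=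
  hyperSober_prod_general hX hY
end

section
/- Let X be a hyper-sober space and F an irreducible subset of X with F ⊆ cl({x}) for some x ∈ F. Then x is not in the closure of F \ {x}. -/
theorem not_mem_closure_diff {X : Type*} [TopologicalSpace X] [T0Space X]
    (hX : HyperSober X) (F : Set X) (hF : IsIrred F) (x : X) (hx : x ∈ F)
    (hsub : F ⊆ closure {x}) : x ∉ closure (F \ {x}) := by
  intro hcl
  set G := F \ {x} with hG
  have hGne : G.Nonempty := by
    by_contra h
    rw [Set.not_nonempty_iff_eq_empty] at h
    rw [h, closure_empty] at hcl
    exact hcl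
  have hGirr : IsIrred G := by
    refine ⟨hGne, fun B C hB hC hBC => ?_⟩
    have hxBC : x ∈ B ∪ C := by
      have : closure G ⊆ B ∪ C := closure_minimal hBC (hB.union hC)
      exact this hcl
    have hFBC : F ⊆ B ∪ C := by
      intro y hy
      by_cases hyx : y = x
      · exact hyx ▸ hxBC
      · exact hBC ⟨hy, hyx⟩
    rcases hF.2 B C hB hC hFBC with h | h
    · exact Or.inl (fun y hy => h hy.1)
    · exact Or.inr (fun y hy => h hy.1)
  obtain ⟨y, ⟨hyG, hGy⟩, _⟩ := hX G hGirr
  obtain ⟨z, hz, huniq⟩ := hX F hF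
  have hxeq : x = z := huniq x ⟨hx, hsub⟩
  have hFy : F ⊆ closure {y} := by
    intro w hw
    by_cases hwx : w = x
    · subst hwx
      have : closure G ⊆ closure {y} := closure_minimal hGy isClosed_closure
      exact this hcl
    · exact hGy ⟨hw, hwx⟩
  have hyeq : y = z := huniq y ⟨hyG.1, hFy⟩
  exact hyG.2 (by rw [hyeq, ← hxeq]; exact rfl)
end

section
/- Let X be a T0 space and K(X) the set of nonempty compact saturated subsets of X with the upper Vietoris topology (generated by the sets □U = {K ∈ K(X) : K ⊆ U} for U open). If 𝒦 is a compact subset of this Smyth power space P_S(X), then ⋃𝒦 is a nonempty compact saturated subset of X. -/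
/-- A set is saturated if it is the intersection of the open sets containing it. -/
def IsSaturated {X : Type*} [TopologicalSpace X] (S : Set X) : Prop :=
  S = ⋂₀ {U : Set X | IsOpen U ∧ S ⊆ U}

/-- `KSet X` is the set of nonempty compact saturated subsets of `X`. -/
def KSet (X : Type*) [TopologicalSpace X] : Type _ :=
  {K : Set X // K.Nonempty ∧ IsCompact K ∧ IsSaturated K}

/-- The upper Vietoris topology on `KSet X`, generated by the sets
`□U = {K : K ⊆ U}` for `U` open: this makes `KSet X` the Smyth power space `P_S(X)`. -/
instance upperVietoris {X : Type*} [TopologicalSpace X] : TopologicalSpace (KSet X) :=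
  TopologicalSpace.generateFrom
    {s : Set (KSet X) | ∃ U : Set X, IsOpen U ∧ s = {K : KSet X | K.1 ⊆ U}}

theorem union_of_compact_family {X : Type*} [TopologicalSpace X] [T0Space X]
    (𝒦 : Set (KSet X)) (hne : 𝒦.Nonempty) (hc : IsCompact 𝒦) :
    (⋃ K ∈ 𝒦, K.1).Nonempty ∧ IsCompact (⋃ K ∈ 𝒦, K.1) ∧
      IsSaturated (⋃ K ∈ 𝒦, K.1) := by
  obtain ⟨K0, hK0⟩ := hne
  refine ⟨?_, ?_, ?_⟩
  · obtain ⟨x, hx⟩ := K0.2.1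
    exact ⟨x, Set.mem_biUnion hK0 hx⟩
  · classical
    apply isCompact_of_finite_subcover
    intro ι U hU hcov
    have hsub : ∀ k : 𝒦, ∃ t : Finset ι, (k : KSet X).1 ⊆ ⋃ i ∈ t, U i := fun k =>
      k.1.2.2.1.elim_finite_subcover U hU (fun x hx => hcov (Set.mem_biUnion k.2 hx))
    choose t ht using hsub
    have hWopen : ∀ k : 𝒦, IsOpen {L : KSet X | L.1 ⊆ ⋃ i ∈ t k, U i} := fun k =>
      TopologicalSpace.isOpen_generateFrom_of_mem
        ⟨_, isOpen_biUnion fun i _ => hU i, rfl⟩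
    have hKcov : 𝒦 ⊆ ⋃ k : 𝒦, {L : KSet X | L.1 ⊆ ⋃ i ∈ t k, U i} := fun L hL =>
      Set.mem_iUnion.2 ⟨⟨L, hL⟩, ht ⟨L, hL⟩⟩
    obtain ⟨s, hs⟩ := hc.elim_finite_subcover _ hWopen hKcov
    refine ⟨s.biUnion t, fun x hx => ?_⟩
    obtain ⟨K, hK, hxK⟩ := Set.mem_iUnion₂.1 hx
    obtain ⟨k, hks, hKk⟩ := Set.mem_iUnion₂.1 (hs hK)
    obtain ⟨i, hit, hxi⟩ := Set.mem_iUnion₂.1 (hKk hxK)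
    exact Set.mem_iUnion₂.2 ⟨i, Finset.mem_biUnion.2 ⟨k, hks, hit⟩, hxi⟩
  · apply Set.Subset.antisymm
    · exact fun x hx => Set.mem_sInter.2 fun U hU => hU.2 hx
    · intro x hx
      by_contra hxS
      have key : ∀ k : 𝒦, ∃ U, IsOpen U ∧ (k : KSet X).1 ⊆ U ∧ x ∉ U := by
        intro k
        have hxK : x ∉ (k : KSet X).1 := fun h => hxS (Set.mem_biUnion k.2 h)
        rw [k.1.2.2.2] at hxK
        simp only [Set.mem_sInter, Set.mem_setOf_eq, not_forall] at hxK
        obtain ⟨U, ⟨hUo, hKU⟩, hxU⟩ := hxK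
        exact ⟨U, hUo, hKU, hxU⟩
      choose V hVo hKV hxV using key
      have hopen : IsOpen (⋃ k : 𝒦, V k) := isOpen_iUnion hVo
      have hsub : (⋃ K ∈ 𝒦, K.1) ⊆ ⋃ k : 𝒦, V k := by
        intro y hy
        obtain ⟨K, hK, hyK⟩ := Set.mem_iUnion₂.1 hy
        exact Set.mem_iUnion.2 ⟨⟨K, hK⟩, hKV ⟨K, hK⟩ hyK⟩
      have := Set.mem_sInter.1 hx _ ⟨hopen, hsub⟩
      obtain ⟨k, hk⟩ := Set.mem_iUnion.1 this
      exact hxV k hk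
end

section
/- For a T0 space X, the union map ⋃ : P_S(P_S(X)) → P_S(X), sending a nonempty compact saturated family 𝒦 of compact saturated sets to ⋃𝒦, is continuous with respect to the upper Vietoris topologies. -/
/-- For a T0 space `X`, the union map `⋃ : P_S(P_S(X)) → P_S(X)` is continuous with
respect to the upper Vietoris topologies. -/
theorem union_map_continuous {X : Type*} [TopologicalSpace X] [T0Space X]
    (u : KSet (KSet X) → KSet X)
    (hu : ∀ 𝒦 : KSet (KSet X), (u 𝒦).1 = ⋃ K ∈ 𝒦.1, K.1) :
    Continuous u := by
  rw [continuous_generateFrom_iff]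
  rintro s ⟨U, hU, rfl⟩
  have : u ⁻¹' {K : KSet X | K.1 ⊆ U} =
      {𝒦 : KSet (KSet X) | 𝒦.1 ⊆ {K : KSet X | K.1 ⊆ U}} := by
    ext 𝒦
    simp only [Set.mem_preimage, Set.mem_setOf_eq, hu 𝒦, Set.iUnion_subset_iff,
      Set.subset_def (s := 𝒦.1)]
  rw [this]
  exact TopologicalSpace.isOpen_generateFrom_of_mem
    ⟨{K : KSet X | K.1 ⊆ U}, TopologicalSpace.isOpen_generateFrom_of_mem ⟨U, hU, rfl⟩, rfl⟩
end
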